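/- arXiv:2207.04763 — 6 statements merged into one kernel-verified Lean document; each statement's English description precedes it below -/
import Mathlib

section
/- Let M be the 3×4 complex matrix with rows (a_5, a_4, a_4, a_4), (a_5, a_6, a_6, a_3), (a_1, a_1, a_2, a_3) for complex numbers a_1,…,a_6. If rank(M) ≤ 1 and the sum of all entries of M is 0, then a_3 = a_4 = a_5 = a_6 = 0 and 2a_1 + a_2 = 0. -/
/-- For the 3×4 tile-pattern matrix, rank ≤ 1 and total sum 0 force
a₃ = a₄ = a₅ = a₆ = 0 and 2a₁ + a₂ = 0. -/
theorem stmt_3 (a₁ a₂ a₃ a₄ a₅ a₆ : ℂ)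
    (M : Matrix (Fin 3) (Fin 4) ℂ)
    (hM : M = !![a₅, a₄, a₄, a₄; a₅, a₆, a₆, a₃; a₁, a₁, a₂, a₃])
    (hrank : M.rank ≤ 1) (hsum : ∑ i, ∑ j, M i j = 0) :
    a₃ = 0 ∧ a₄ = 0 ∧ a₅ = 0 ∧ a₆ = 0 ∧ 2 * a₁ + a₂ = 0 := by
  have key : ∀ (i i' : Fin 3) (j j' : Fin 4), M i j * M i' j' = M i j' * M i' j := by
    have h0 : Module.finrank ℂ (LinearMap.range M.mulVecLin) ≤ 1 := hrank
    obtain ⟨v, hv⟩ := finrank_le_one_iff.mp h0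
    intro i i' j j'
    obtain ⟨c, hc⟩ := hv ⟨M.mulVec (Pi.single j 1), ⟨Pi.single j 1, rfl⟩⟩
    obtain ⟨c', hc'⟩ := hv ⟨M.mulVec (Pi.single j' 1), ⟨Pi.single j' 1, rfl⟩⟩
    have hc2 := congrArg (fun w : LinearMap.range M.mulVecLin => (w : Fin 3 → ℂ)) hc
    have hc2' := congrArg (fun w : LinearMap.range M.mulVecLin => (w : Fin 3 → ℂ)) hc'
    simp only [SetLike.val_smul] at hc2 hc2'
    have h1 := congrFun hc2 i
    have h2 := congrFun hc2 i'
    have h3 := congrFun hc2' i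
    have h4 := congrFun hc2' i'
    simp [Matrix.mulVec_single] at h1 h2 h3 h4
    rw [← h1, ← h2, ← h3, ← h4]; ring
  subst hM
  -- specific minors
  have e1 := key 0 1 0 1   -- a5 a6 = a4 a5
  have e2 := key 0 1 0 3   -- a5 a3 = a4 a5
  have e3 := key 0 2 0 1   -- a5 a1 = a4 a1
  have e4 := key 0 2 0 2   -- a5 a2 = a4 a1
  have e5 := key 0 2 1 2   -- a4 a2 = a4 a1
  have e6 := key 0 2 1 3   -- a4 a3 = a4 a1
  have e7 := key 0 1 1 3   -- a4 a3 = a4 a6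
  have e8 := key 1 2 0 1   -- a5 a1 = a6 a1
  have e9 := key 1 2 1 2   -- a6 a2 = a6 a1
  have e10 := key 1 2 1 3  -- a6 a3 = a3 a1
  have e11 := key 1 2 2 3  -- a6 a3 = a3 a2
  have e12 := key 1 2 0 3  -- a5 a3 = a3 a1
  simp [Fin.sum_univ_succ] at hsum
  simp only [Matrix.cons_val', Matrix.cons_val_zero, Matrix.cons_val_one, Matrix.head_cons,
    Matrix.empty_val', Matrix.cons_val_fin_one, Matrix.head_fin_const,
    Matrix.cons_val_two, Matrix.cons_val_three, Matrix.tail_cons, Matrix.of_apply]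
    at e1 e2 e3 e4 e5 e6 e7 e8 e9 e10 e11 e12
  -- Step 1: a₄ = 0
  have h4 : a₄ = 0 := by
    by_contra h4
    have ha2 : a₂ = a₁ := mul_left_cancel₀ h4 e5
    have ha3 : a₃ = a₁ := mul_left_cancel₀ h4 e6
    have ha6 : a₆ = a₁ := by
      have : a₄ * a₃ = a₄ * a₆ := by linear_combination e7
      have := mul_left_cancel₀ h4 this
      rw [← this, ha3]
    by_cases h1 : a₁ = 0
    · have h2 : a₂ = 0 := by rw [ha2, h1]
      have h3 : a₃ = 0 := by rw [ha3, h1]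
      have h6 : a₆ = 0 := by rw [ha6, h1]
      have h5 : a₅ = 0 := by
        have h' : a₄ * a₅ = 0 := by rw [← e1, h6, mul_zero]
        exact (mul_eq_zero.mp h').resolve_left h4
      apply h4
      rw [h1, h2, h3, h5, h6] at hsum
      linear_combination hsum / 3
    · have ha5 : a₅ = a₄ := by
        have : a₅ * a₁ = a₄ * a₁ := by linear_combination e3
        exact mul_right_cancel₀ h1 this
      have ha54 : a₅ = a₆ := by
        have : a₅ * a₁ = a₆ * a₁ := by linear_combination e8
        exact mul_right_cancel₀ h1 this
      have ha41 : a₄ = a₁ := by rw [← ha5, ha54, ha6]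
      apply h1
      rw [ha2, ha3, ha6, ha5, ha41] at hsum
      linear_combination hsum / 12
  rw [h4] at e1 e2 e3 e4
  -- Step 2: a₅ = 0
  have h5 : a₅ = 0 := by
    by_contra h5
    have h6 : a₆ = 0 := by
      have : a₅ * a₆ = 0 := by linear_combination e1
      exact (mul_eq_zero.mp this).resolve_left h5
    have h3 : a₃ = 0 := by
      have : a₅ * a₃ = 0 := by linear_combination e2
      exact (mul_eq_zero.mp this).resolve_left h5
    have h1 : a₁ = 0 := by
      have : a₅ * a₁ = 0 := by linear_combination e3
      exact (mul_eq_zero.mp this).resolve_left h5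
    have h2 : a₂ = 0 := by
      have : a₅ * a₂ = 0 := by linear_combination e4
      exact (mul_eq_zero.mp this).resolve_left h5
    apply h5
    rw [h1, h2, h3, h4, h6] at hsum
    linear_combination hsum / 2
  rw [h5] at e8 e12
  -- Step 3: a₆ = 0
  have h6 : a₆ = 0 := by
    by_contra h6
    have h1 : a₁ = 0 := by
      have : a₆ * a₁ = 0 := by linear_combination -e8
      exact (mul_eq_zero.mp this).resolve_left h6
    have h2 : a₂ = 0 := by
      have : a₆ * a₂ = a₆ * a₁ := by linear_combination e9
      rw [h1, mul_zero] at this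
      exact (mul_eq_zero.mp this).resolve_left h6
    have h3 : a₃ = 0 := by
      have : a₆ * a₃ = a₃ * a₁ := by linear_combination e10
      rw [h1, mul_zero] at this
      exact (mul_eq_zero.mp this).resolve_left h6
    apply h6
    rw [h1, h2, h3, h4, h5] at hsum
    linear_combination hsum / 2
  -- Step 4: a₃ = 0
  have h3 : a₃ = 0 := by
    by_contra h3
    have h1 : a₁ = 0 := by
      have : a₃ * a₁ = 0 := by linear_combination -e12
      exact (mul_eq_zero.mp this).resolve_left h3
    have h2 : a₂ = 0 := by
      have : a₃ * a₂ = a₆ * a₃ := by linear_combination -e11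
      rw [h6, zero_mul] at this
      exact (mul_eq_zero.mp this).resolve_left h3
    apply h3
    rw [h1, h2, h4, h5, h6] at hsum
    linear_combination hsum / 2
  refine ⟨h3, h4, h5, h6, ?_⟩
  rw [h3, h4, h5, h6] at hsum
  linear_combination hsum
end

section
/- Let M be the 3×4 complex matrix with rows (a_5, a_4, a_4, a_4), (a_5, a_6, a_6, a_3), (a_1, a_1, a_2, a_3). If rank(M) ≤ 1, the sum of all entries of M is 0, and additionally 2a_1 = a_2, then M = 0 (i.e., a_1 = ⋯ = a_6 = 0). -/
open Matrix

lemma minor_vanish {m n : Type*} [Fintype m] [Fintype n] [DecidableEq n]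
    (M : Matrix m n ℂ) (h : M.rank ≤ 1) (i k : m) (j l : n) :
    M i j * M k l = M i l * M k j := by
  set v : m → ℂ := fun i => M i j with hv
  set w : m → ℂ := fun i => M i l with hw
  have hvr : v ∈ LinearMap.range M.mulVecLin := ⟨Pi.single j 1, by
    ext i; simp [mulVecLin, mulVec_single, v]⟩
  have hwr : w ∈ LinearMap.range M.mulVecLin := ⟨Pi.single l 1, by
    ext i; simp [mulVecLin, mulVec_single, w]⟩
  have hdep : ¬ LinearIndependent ℂ ![v, w] := by
    intro hind
    have hsub : Set.range ![v, w] ⊆ (LinearMap.range M.mulVecLin : Set (m → ℂ)) := by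
      rintro x ⟨t, rfl⟩
      fin_cases t
      · exact hvr
      · exact hwr
    have hle := Submodule.finrank_mono (Submodule.span_le.mpr hsub)
    rw [finrank_span_eq_card hind] at hle
    simp only [Fintype.card_fin] at hle
    have : M.rank = Module.finrank ℂ (LinearMap.range M.mulVecLin) := rfl
    omega
  rw [LinearIndependent.pair_iff] at hdep
  push_neg at hdep
  obtain ⟨c, d, hcd, hne⟩ := hdep
  have hpt : ∀ x, c * v x + d * w x = 0 := fun x => congrFun hcd x
  by_cases hc : c = 0
  · have hd : d ≠ 0 := hne hc
    have hz : ∀ x, w x = 0 := fun x => by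
      have := hpt x; rw [hc] at this; simp at this
      simpa [hd] using this
    show v i * w k = w i * v k
    rw [hz k, hz i]; ring
  · have hvw : ∀ x, v x = -(d/c) * w x := fun x => by
      have := hpt x; field_simp at this ⊢; linear_combination this
    show v i * w k = w i * v k
    rw [hvw i, hvw k]; ring

/-- For the 3×4 tile-pattern matrix, rank ≤ 1, total sum 0, and 2a₁ = a₂
force the matrix to vanish. -/
theorem stmt_4 (a₁ a₂ a₃ a₄ a₅ a₆ : ℂ)
    (M : Matrix (Fin 3) (Fin 4) ℂ)
    (hM : M = !![a₅, a₄, a₄, a₄; a₅, a₆, a₆, a₃; a₁, a₁, a₂, a₃])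
    (hrank : M.rank ≤ 1) (hsum : ∑ i, ∑ j, M i j = 0)
    (ha : 2 * a₁ = a₂) :
    a₁ = 0 ∧ a₂ = 0 ∧ a₃ = 0 ∧ a₄ = 0 ∧ a₅ = 0 ∧ a₆ = 0 := by
  subst hM
  have e1 := minor_vanish _ hrank 0 2 1 2
  have e2 := minor_vanish _ hrank 1 2 1 2
  have e3 := minor_vanish _ hrank 1 2 0 1
  have e4 := minor_vanish _ hrank 1 2 0 3
  have e6 := minor_vanish _ hrank 0 1 0 1
  have e7 := minor_vanish _ hrank 0 1 2 3
  have e8 := minor_vanish _ hrank 1 2 2 3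
  have e9 := minor_vanish _ hrank 0 2 2 3
  simp [Matrix.vecHead, Matrix.vecTail] at e1 e2 e3 e4 e6 e7 e8 e9
  simp [Fin.sum_univ_succ, Matrix.vecHead, Matrix.vecTail] at hsum
  by_cases hA : a₁ = 0
  · subst hA
    have h2 : a₂ = 0 := by linear_combination -ha
    subst h2
    by_cases h3 : a₃ = 0
    · subst h3
      rcases e7 with h6 | h4
      · -- h6 : 0 = a₆
        have h6' : a₆ = 0 := h6.symm
        rcases mul_eq_zero.mp (by linear_combination -e6 - a₅ * h6 : a₄ * a₅ = 0) with h4 | h5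
        · exact ⟨rfl, rfl, rfl, h4, by linear_combination (hsum - 3*h4 - 2*h6')/2, h6'⟩
        · exact ⟨rfl, rfl, rfl, by linear_combination (hsum - 2*h5 - 2*h6')/3, h5, h6'⟩
      · -- h4 : a₄ = 0
        have h56 : a₅ * a₆ = 0 := by linear_combination e6 + a₅ * h4
        have h5 : a₅ = -a₆ := by linear_combination (hsum - 3*h4)/2
        have h6 : a₆ = 0 := by
          rcases mul_eq_zero.mp h56 with h | h
          · rw [h5] at h; linear_combination -h
          · exact h
        exact ⟨rfl, rfl, rfl, h4, by rw [h5, h6]; ring, h6⟩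
    · -- a₃ ≠ 0
      have h5 : a₅ = 0 := by
        rcases mul_eq_zero.mp (by linear_combination e4 : a₅ * a₃ = 0) with h | h
        exacts [h, absurd h h3]
      have h6 : a₆ = 0 := by
        rcases mul_eq_zero.mp (by linear_combination e8 : a₆ * a₃ = 0) with h | h
        exacts [h, absurd h h3]
      have h4 : a₄ = 0 := by
        rcases e9 with h | h
        exacts [absurd h h3, h]
      exact absurd (by linear_combination (hsum - 2*h5 - 3*h4 - 2*h6)/2) h3
  · exfalso
    have h4 : a₄ = 0 := by
      rcases e1 with h | h
      · exact absurd (by linear_combination ha + h : a₁ = 0) hA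
      · exact h
    have h6 : a₆ = 0 := by
      rcases e2 with h | h
      · exact absurd (by linear_combination ha + h : a₁ = 0) hA
      · exact h
    have h5 : a₅ = 0 := by
      rcases e3 with h | h
      · rw [h]; exact h6
      · exact absurd h hA
    have h3 : a₃ = 0 := by
      rcases mul_eq_zero.mp (by linear_combination -e4 + a₃ * h5 : a₃ * a₁ = 0) with h | h
      exacts [h, absurd h hA]
    exact hA (by linear_combination (hsum - 2*h5 - 3*h4 - 2*h6 - 2*h3 + ha)/4)
end

section
/- Every product state in ℂ^3 ⊗ ℂ^4 orthogonal to all 11 vectors of the set S (the ℂ^3⊗ℂ^4 tile SUCPB) is a scalar multiple of |0⟩ ⊗ (|0⟩ + |1⟩ − 2|2⟩). In particular, the orthogonal complement of span(S), which has dimension 5, is not spanned by its product states. -/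
noncomputable section

def ket3 (i : Fin 3) : Fin 3 → ℂ := fun j => if j = i then 1 else 0
def ket4 (i : Fin 4) : Fin 4 → ℂ := fun j => if j = i then 1 else 0

def ω : ℂ := Complex.exp (2 * Real.pi * Complex.I / 3)

def sA : Fin 7 → (Fin 3 → ℂ)
  | 0 => ket3 0
  | 1 => ket3 0 - ket3 1
  | 2 => ket3 2
  | 3 => ket3 2
  | 4 => ket3 1 - ket3 2
  | 5 => ket3 1
  | 6 => ket3 0 + ket3 1 + ket3 2

def sB : Fin 7 → (Fin 4 → ℂ)
  | 0 => ket4 0 - ket4 1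
  | 1 => ket4 3
  | 2 => ket4 1 + ω • ket4 2 + ω ^ 2 • ket4 3
  | 3 => ket4 1 + ω ^ 2 • ket4 2 + ω • ket4 3
  | 4 => ket4 0
  | 5 => ket4 1 - ket4 2
  | 6 => ket4 0 + ket4 1 + ket4 2 + ket4 3

/-- The set S of Eq. (11) in ℂ³⊗ℂ⁴, as vectors of the Euclidean space. -/
def sVec : Fin 7 → EuclideanSpace ℂ (Fin 3 × Fin 4) := fun k => WithLp.toLp 2 (fun x : Fin 3 × Fin 4 => sA k x.1 * sB k x.2)

/-- The product state |0⟩ ⊗ (|0⟩ + |1⟩ − 2|2⟩). -/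
def target : EuclideanSpace ℂ (Fin 3 × Fin 4) :=
  WithLp.toLp 2 (fun x : Fin 3 × Fin 4 => ket3 0 x.1 * (ket4 0 + ket4 1 - (2 : ℂ) • ket4 2) x.2)

lemma omega_pow : ω ^ 3 = 1 := by
  have h := Complex.isPrimitiveRoot_exp 3 (by norm_num)
  have e : ω = Complex.exp (2 * ↑Real.pi * Complex.I / (3:ℕ)) := by norm_num [ω]
  rw [e]; exact h.pow_eq_one

lemma omega_ne_one : ω ≠ 1 := by
  have h := Complex.isPrimitiveRoot_exp 3 (by norm_num)
  have e : ω = Complex.exp (2 * ↑Real.pi * Complex.I / (3:ℕ)) := by norm_num [ω]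
  rw [e]; exact h.ne_one (by norm_num)

lemma omega_sum : 1 + ω + ω ^ 2 = 0 := by
  have h := omega_pow
  have h2 : (ω - 1) * (1 + ω + ω ^ 2) = 0 := by linear_combination h
  rcases mul_eq_zero.mp h2 with h' | h'
  · exact absurd (sub_eq_zero.mp h') omega_ne_one
  · exact h'

lemma omega_ne_zero : ω ≠ 0 := by
  intro h; have := omega_pow; rw [h] at this; norm_num at this

lemma omega_ne_sq : ω ≠ ω ^ 2 := by
  intro h
  have h2 : ω * (1 - ω) = 0 := by linear_combination h
  rcases mul_eq_zero.mp h2 with h' | h'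
  · exact omega_ne_zero h'
  · exact omega_ne_one (sub_eq_zero.mp h').symm

lemma conj_omega_sum : 1 + (starRingEnd ℂ) ω + ((starRingEnd ℂ) ω) ^ 2 = 0 := by
  have := congrArg (starRingEnd ℂ) omega_sum
  simpa [map_add, map_pow] using this

lemma conj_omega_ne_sq : (starRingEnd ℂ) ω ≠ ((starRingEnd ℂ) ω) ^ 2 := by
  intro h
  apply omega_ne_sq
  have := congrArg (starRingEnd ℂ) h
  simpa [map_pow] using this
lemma key1 (u : Fin 3 → ℂ) (v : Fin 4 → ℂ)
    (hne : (WithLp.toLp 2 (fun x : Fin 3 × Fin 4 => u x.1 * v x.2) : EuclideanSpace ℂ (Fin 3 × Fin 4)) ≠ 0)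
    (h : ∀ k, (inner ℂ (sVec k) (WithLp.toLp 2 (fun x : Fin 3 × Fin 4 => u x.1 * v x.2) : EuclideanSpace ℂ (Fin 3 × Fin 4)) : ℂ) = 0) :
    u 1 = 0 ∧ u 2 = 0 ∧ v 1 = v 0 ∧ v 2 = -2 * v 0 ∧ v 3 = 0 := by
  have h0 := h 0; have h1 := h 1; have h2 := h 2; have h3 := h 3
  have h4 := h 4; have h5 := h 5; have h6 := h 6
  simp +decide [sVec, sA, sB, ket3, ket4, PiLp.inner_apply, Fintype.sum_prod_type, Fin.sum_univ_succ,
    Fin.succ, Fin.ext_iff, -Fin.val_eq_zero_iff, map_add, map_mul, map_pow] at h0 h1 h2 h3 h4 h5 h6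
  have hex : ∃ x : Fin 3 × Fin 4, u x.1 * v x.2 ≠ 0 := by
    by_contra hc; push_neg at hc
    apply hne; ext x; simpa using hc x
  obtain ⟨⟨i, j⟩, hij⟩ := hex
  have hu : u i ≠ 0 := left_ne_zero_of_mul hij
  have hv : v j ≠ 0 := right_ne_zero_of_mul hij
  by_cases hu2 : u 2 = 0
  · by_cases hu1 : u 1 = 0
    · -- main case
      by_cases hu0 : u 0 = 0
      · exfalso
        have : u i = 0 := by fin_cases i <;> assumption
        exact hu this
      · have e0 : u 0 * (v 0 - v 1) = 0 := by linear_combination h0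
        have hv1 : v 1 = v 0 := by
          rcases mul_eq_zero.mp e0 with h' | h'
          · exact absurd h' hu0
          · exact (sub_eq_zero.mp h').symm
        have e1 : (u 0 - u 1) * v 3 = 0 := by linear_combination h1
        have hv3 : v 3 = 0 := by
          rcases mul_eq_zero.mp e1 with h' | h'
          · exfalso; apply hu0; linear_combination h' + hu1
          · exact h'
        have e6 : u 0 * (v 0 + v 1 + v 2 + v 3) = 0 := by
          linear_combination h6 - (v 0 + v 1 + v 2 + v 3) * hu1 - (v 0 + v 1 + v 2 + v 3) * hu2
        have hv2 : v 2 = -2 * v 0 := by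
          rcases mul_eq_zero.mp e6 with h' | h'
          · exact absurd h' hu0
          · linear_combination h' - hv1 - hv3
        exact ⟨hu1, hu2, hv1, hv2, hv3⟩
    · -- u 2 = 0, u 1 ≠ 0 : contradiction
      exfalso
      have hv0 : v 0 = 0 := by
        have e4 : u 1 * v 0 = 0 := by linear_combination h4 + v 0 * hu2
        rcases mul_eq_zero.mp e4 with h' | h'
        · exact absurd h' hu1
        · exact h'
      have hv12 : v 1 = v 2 := by
        have e5 : u 1 * (v 1 - v 2) = 0 := by linear_combination h5
        rcases mul_eq_zero.mp e5 with h' | h'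
        · exact absurd h' hu1
        · exact sub_eq_zero.mp h'
      by_cases hu0 : u 0 = 0
      · have hv3 : v 3 = 0 := by
          have e1 : u 1 * v 3 = 0 := by linear_combination -h1 + v 3 * hu0
          rcases mul_eq_zero.mp e1 with h' | h'
          · exact absurd h' hu1
          · exact h'
        have hv1 : v 1 = 0 := by
          rw [hu0, hv0, hv3, ← hv12] at h6
          have e6 : u 1 * v 1 = 0 := by linear_combination h6 / 2 - v 1 * hu2
          rcases mul_eq_zero.mp e6 with h' | h'
          · exact absurd h' hu1
          · exact h'
        have : v j = 0 := by
          fin_cases j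
          · exact hv0
          · exact hv1
          · exact hv12 ▸ hv1
          · exact hv3
        exact hv this
      · have hv1 : v 1 = 0 := by
          have e0 : u 0 * v 1 = 0 := by linear_combination -h0 + v 1 * hu0 + u 0 * hv0
          rcases mul_eq_zero.mp e0 with h' | h'
          · exact absurd h' hu0
          · exact h'
        by_cases hv3 : v 3 = 0
        · have : v j = 0 := by
            fin_cases j
            · exact hv0
            · exact hv1
            · exact hv12 ▸ hv1
            · exact hv3
          exact hv this
        · have e1 : (u 0 - u 1) * v 3 = 0 := by linear_combination h1
          have hA : u 0 = u 1 := by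
            rcases mul_eq_zero.mp e1 with h' | h'
            · exact sub_eq_zero.mp h'
            · exact absurd h' hv3
          rw [hv0, hv1, ← hv12, hv1, hA] at h6
          have e6 : u 1 * v 3 = 0 := by linear_combination h6 / 2 - (v 3 / 2) * hu2
          rcases mul_eq_zero.mp e6 with h' | h'
          · exact absurd h' hu1
          · exact absurd h' hv3
  · -- u 2 ≠ 0 : contradiction
    exfalso
    have hc := conj_omega_sum
    have key : ((starRingEnd ℂ) ω - ((starRingEnd ℂ) ω) ^ 2) * (u 2 * (v 2 - v 3)) = 0 := by
      linear_combination h2 - h3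
    have htne : (starRingEnd ℂ) ω - ((starRingEnd ℂ) ω) ^ 2 ≠ 0 :=
      sub_ne_zero.mpr conj_omega_ne_sq
    have hv23 : v 3 = v 2 := by
      rcases mul_eq_zero.mp key with h' | h'
      · exact absurd h' htne
      rcases mul_eq_zero.mp h' with h'' | h''
      · exact absurd h'' hu2
      · exact (sub_eq_zero.mp h'').symm
    have hv12 : v 1 = v 2 := by
      have e2 : u 2 * (v 1 - v 2) = 0 := by
        linear_combination h2 - (((starRingEnd ℂ) ω) ^ 2 * u 2) * hv23 - (u 2 * v 2) * hc
      rcases mul_eq_zero.mp e2 with h' | h'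
      · exact absurd h' hu2
      · exact sub_eq_zero.mp h'
    have e4 : (u 1 - u 2) * v 0 = 0 := by linear_combination h4
    rcases mul_eq_zero.mp e4 with hB | hB
    · -- u 1 = u 2
      have hu12 : u 1 = u 2 := sub_eq_zero.mp hB
      by_cases hv1 : v 1 = 0
      · -- v 1 = v 2 = v 3 = 0
        have hv2 : v 2 = 0 := hv12 ▸ hv1
        by_cases hv0 : v 0 = 0
        · have : v j = 0 := by
            fin_cases j
            · exact hv0
            · exact hv1
            · exact hv2
            · exact hv23.trans hv2
          exact hv this
        · have hu0 : u 0 = 0 := by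
            have e0 : u 0 * v 0 = 0 := by linear_combination h0 + u 0 * (hv12 ▸ hv1 : v 1 = 0)
            rcases mul_eq_zero.mp e0 with h' | h'
            · exact h'
            · exact absurd h' hv0
          rw [hu0, hu12, hv1, hv2, hv23.trans hv2] at h6
          have e6 : u 2 * v 0 = 0 := by linear_combination h6 / 2
          rcases mul_eq_zero.mp e6 with h' | h'
          · exact absurd h' hu2
          · exact absurd h' hv0
      · -- v 1 ≠ 0
        have hv2ne : v 2 ≠ 0 := hv12 ▸ hv1
        have hu01 : u 0 = u 1 := by
          have e1 : (u 0 - u 1) * v 3 = 0 := by linear_combination h1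
          rcases mul_eq_zero.mp e1 with h' | h'
          · exact sub_eq_zero.mp h'
          · exact absurd (hv23.symm.trans h') hv2ne
        have hu0ne : u 0 ≠ 0 := by rw [hu01, hu12]; exact hu2
        have hv01 : v 0 = v 1 := by
          have e0 : u 0 * (v 0 - v 1) = 0 := by linear_combination h0
          rcases mul_eq_zero.mp e0 with h' | h'
          · exact absurd h' hu0ne
          · exact sub_eq_zero.mp h'
        have hu02 : u 0 = u 2 := hu01.trans hu12
        have hv02 : v 0 = v 2 := hv01.trans hv12
        rw [hu02, hu12, hv02, hv12, hv23] at h6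
        have e6 : u 2 * v 2 = 0 := by linear_combination h6 / 12
        rcases mul_eq_zero.mp e6 with h' | h'
        · exact absurd h' hu2
        · exact absurd h' hv2ne
    · -- v 0 = 0
      have e0 : u 0 * v 1 = 0 := by linear_combination -h0 + u 0 * hB
      by_cases hv1 : v 1 = 0
      · have : v j = 0 := by
          fin_cases j
          · exact hB
          · exact hv1
          · exact hv12 ▸ hv1
          · exact hv23.trans (hv12 ▸ hv1)
        exact hv this
      · have hu0 : u 0 = 0 := by
          rcases mul_eq_zero.mp e0 with h' | h'
          · exact h'
          · exact absurd h' hv1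
        have hv3ne : v 3 ≠ 0 := by rw [hv23]; exact hv12 ▸ hv1
        have hu1z : u 1 = 0 := by
          have e1 : u 1 * v 3 = 0 := by linear_combination -h1 + v 3 * hu0
          rcases mul_eq_zero.mp e1 with h' | h'
          · exact h'
          · exact absurd h' hv3ne
        rw [hu0, hu1z, hB, hv12, hv23] at h6
        have e6 : u 2 * v 2 = 0 := by linear_combination h6 / 3
        rcases mul_eq_zero.mp e6 with h' | h'
        · exact absurd h' hu2
        · exact absurd h' (hv12 ▸ hv1)
lemma sVec_li : LinearIndependent ℂ sVec := by
  rw [Fintype.linearIndependent_iff]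
  intro g hg
  have e : ∀ x : Fin 3 × Fin 4, ∑ k : Fin 7, g k * sVec k x = 0 := by
    intro x
    have := congrArg (fun w : EuclideanSpace ℂ (Fin 3 × Fin 4) => w x) hg
    simpa [WithLp.ofLp_sum, Finset.sum_apply, PiLp.smul_apply, smul_eq_mul] using this
  have e00 := e (0,0); have e03 := e (0,3); have e10 := e (1,0); have e11 := e (1,1)
  have e20 := e (2,0); have e21 := e (2,1); have e22 := e (2,2)
  simp +decide [sVec, sA, sB, ket3, ket4, Fin.sum_univ_succ, Fin.succ, Fin.ext_iff] at e00 e03 e10 e11 e20 e21 e22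
  have h6 : g 6 = 0 := by linear_combination (e10 + e20) / 2
  have h4 : g 4 = 0 := by linear_combination (e10 - e20) / 2
  have h0 : g 0 = 0 := by linear_combination e00 - h6
  have h1 : g 1 = 0 := by linear_combination e03 - h6
  have h5 : g 5 = 0 := by linear_combination e11 - h6
  have h2 : g 2 = 0 := by
    have key : (ω - ω ^ 2) * g 2 = 0 := by
      linear_combination e22 - ω ^ 2 * e21 - (1 - ω ^ 2) * h6
    rcases mul_eq_zero.mp key with h' | h'
    · exact absurd h' (sub_ne_zero.mpr omega_ne_sq)
    · exact h'
  have h3 : g 3 = 0 := by linear_combination e21 - h2 - h6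
  intro i; fin_cases i <;> assumption
/-- Every product state orthogonal to the set S is a multiple of
|0⟩⊗(|0⟩+|1⟩−2|2⟩); the orthogonal complement of span(S) has dimension 5
and is not spanned by its product states. -/
theorem stmt_6 :
    (∀ ψ : EuclideanSpace ℂ (Fin 3 × Fin 4), ψ ≠ 0 →
      (∃ (u : Fin 3 → ℂ) (v : Fin 4 → ℂ), ψ = WithLp.toLp 2 (fun x : Fin 3 × Fin 4 => u x.1 * v x.2)) →
      (∀ k, (inner ℂ (sVec k) ψ : ℂ) = 0) →
      ∃ c : ℂ, ψ = c • target) ∧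
    Module.finrank ℂ ((Submodule.span ℂ (Set.range sVec))ᗮ) = 5 ∧
    Submodule.span ℂ {ψ : EuclideanSpace ℂ (Fin 3 × Fin 4) |
        ψ ∈ (Submodule.span ℂ (Set.range sVec))ᗮ ∧ ψ ≠ 0 ∧
        ∃ (u : Fin 3 → ℂ) (v : Fin 4 → ℂ), ψ = WithLp.toLp 2 (fun x : Fin 3 × Fin 4 => u x.1 * v x.2)}
      ≠ (Submodule.span ℂ (Set.range sVec))ᗮ := by
  have part1 : (∀ ψ : EuclideanSpace ℂ (Fin 3 × Fin 4), ψ ≠ 0 →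
      (∃ (u : Fin 3 → ℂ) (v : Fin 4 → ℂ), ψ = WithLp.toLp 2 (fun x : Fin 3 × Fin 4 => u x.1 * v x.2)) →
      (∀ k, (inner ℂ (sVec k) ψ : ℂ) = 0) →
      ∃ c : ℂ, ψ = c • target) := by
    intro ψ hψ hprod hinner
    obtain ⟨u, v, rfl⟩ := hprod
    obtain ⟨hu1, hu2, hv1, hv2, hv3⟩ := key1 u v hψ hinner
    refine ⟨u 0 * v 0, ?_⟩
    ext x
    obtain ⟨i, j⟩ := x
    fin_cases i <;> fin_cases j <;>
      simp +decide [target, ket3, ket4, Fin.ext_iff, -Fin.val_eq_zero_iff, PiLp.smul_apply, smul_eq_mul,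
        hu1, hu2, hv1, hv2, hv3] <;> ring
  have hrank : Module.finrank ℂ (Submodule.span ℂ (Set.range sVec)) = 7 := by
    rw [finrank_span_eq_card sVec_li]; simp
  have htot : Module.finrank ℂ (EuclideanSpace ℂ (Fin 3 × Fin 4)) = 12 := by
    simp [finrank_euclideanSpace]
  have horth : Module.finrank ℂ ((Submodule.span ℂ (Set.range sVec))ᗮ) = 5 := by
    have hh := Submodule.finrank_add_finrank_orthogonal
      (K := Submodule.span ℂ (Set.range sVec))
    rw [hrank, htot] at hh
    omega
  refine ⟨part1, horth, ?_⟩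
  intro heq
  have htne : target ≠ 0 := by
    intro h
    have := congrArg (fun w : EuclideanSpace ℂ (Fin 3 × Fin 4) => w (0, 0)) h
    simp +decide [target, ket3, ket4, Fin.ext_iff, -Fin.val_eq_zero_iff] at this
  have hsub : {ψ : EuclideanSpace ℂ (Fin 3 × Fin 4) |
        ψ ∈ (Submodule.span ℂ (Set.range sVec))ᗮ ∧ ψ ≠ 0 ∧
        ∃ (u : Fin 3 → ℂ) (v : Fin 4 → ℂ), ψ = WithLp.toLp 2 (fun x : Fin 3 × Fin 4 => u x.1 * v x.2)}
      ⊆ (Submodule.span ℂ {target} : Set (EuclideanSpace ℂ (Fin 3 × Fin 4))) := by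
    rintro ψ ⟨hmem, hne, hprod⟩
    have hinner : ∀ k, (inner ℂ (sVec k) ψ : ℂ) = 0 := fun k =>
      (Submodule.mem_orthogonal _ ψ).mp hmem (sVec k) (Submodule.subset_span ⟨k, rfl⟩)
    obtain ⟨c, rfl⟩ := part1 ψ hne hprod hinner
    exact Submodule.smul_mem _ c (Submodule.mem_span_singleton_self target)
  have hle : (Submodule.span ℂ (Set.range sVec))ᗮ ≤ Submodule.span ℂ {target} :=
    heq ▸ Submodule.span_le.mpr hsub
  have hfin : (5:ℕ) ≤ 1 := by
    calc (5:ℕ) = Module.finrank ℂ ((Submodule.span ℂ (Set.range sVec))ᗮ) := horth.symm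
    _ ≤ Module.finrank ℂ (Submodule.span ℂ ({target} : Set (EuclideanSpace ℂ (Fin 3 × Fin 4)))) :=
        Submodule.finrank_mono hle
    _ = 1 := finrank_span_singleton htne
  omega

end
end

section
/- If a tile structure T = ∪_{i=1}^s t_i partitions the grid ℤ_m × ℤ_n into disjoint rectangles t_i = P_i × Q_i, and for each i an orthogonal product set A_i is constructed from tile t_i via row-orthogonal coefficient matrices, then B = ∪_{i=1}^s A_i is an orthogonal basis of ℂ^m ⊗ ℂ^n (it has mn pairwise orthogonal nonzero elements spanning ℂ^m ⊗ ℂ^n). -/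
private theorem rowsum16 (m K : ℕ) (p : Fin K → Fin m) (hp : Function.Injective p)
    (u v : Fin K → ℂ) :
    ∑ x : Fin m, (starRingEnd ℂ) (∑ e, u e * (if x = p e then 1 else 0)) *
      (∑ e, v e * (if x = p e then 1 else 0)) = ∑ e, (starRingEnd ℂ) (u e) * v e := by
  simp only [mul_ite, mul_one, mul_zero, map_sum, apply_ite, map_zero]
  simp only [Finset.sum_mul, ite_mul, zero_mul]
  rw [Finset.sum_comm]
  refine Finset.sum_congr rfl fun e _ => ?_
  simp only [Finset.mul_sum, mul_ite, mul_zero]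
  simp only [Finset.sum_ite_eq', Finset.mem_univ, if_true]
  simp [hp.eq_iff]

private theorem selfsum16 (K : ℕ) (u : Fin K → ℂ) (hu : u ≠ 0) :
    ∑ e, (starRingEnd ℂ) (u e) * u e ≠ 0 := by
  have h : ∑ e, (starRingEnd ℂ) (u e) * u e = ((∑ e, Complex.normSq (u e) : ℝ) : ℂ) := by
    push_cast
    exact Finset.sum_congr rfl fun e _ => (Complex.normSq_eq_conj_mul_self).symm
  rw [h]
  rw [Complex.ofReal_ne_zero]
  intro h0
  apply hu
  funext e
  have := (Finset.sum_eq_zero_iff_of_nonneg (fun i _ => Complex.normSq_nonneg (u i))).mp h0 e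
    (Finset.mem_univ e)
  exact Complex.normSq_eq_zero.mp this

/-- If a tile structure partitions ℤ_m × ℤ_n into rectangles and each tile
carries an OPS built from row-orthogonal matrices, the union of the tile
families is an orthogonal basis of ℂ^m ⊗ ℂ^n: it consists of mn pairwise
orthogonal nonzero vectors spanning the whole space. -/
theorem stmt_16 (m n s : ℕ) (k ℓ : Fin s → ℕ)
    (p : ∀ i, Fin (k i) → Fin m) (q : ∀ i, Fin (ℓ i) → Fin n)
    (hp : ∀ i, Function.Injective (p i)) (hq : ∀ i, Function.Injective (q i))
    (hdisj : ∀ i j, i ≠ j →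
      Disjoint (Set.range (p i) ×ˢ Set.range (q i))
               (Set.range (p j) ×ˢ Set.range (q j)))
    (hcover : (⋃ i, Set.range (p i) ×ˢ Set.range (q i)) = Set.univ)
    (M : ∀ i, Matrix (Fin (k i)) (Fin (k i)) ℂ)
    (N : ∀ i, Matrix (Fin (ℓ i)) (Fin (ℓ i)) ℂ)
    (hMrow : ∀ i a, M i a ≠ 0) (hNrow : ∀ i b, N i b ≠ 0)
    (hMorth : ∀ i a a', a ≠ a' → ∑ e, (starRingEnd ℂ) (M i a e) * M i a' e = 0)
    (hNorth : ∀ i b b', b ≠ b' → ∑ f, (starRingEnd ℂ) (N i b f) * N i b' f = 0)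
    (Ψ : ((i : Fin s) × (Fin (k i) × Fin (ℓ i))) → EuclideanSpace ℂ (Fin m × Fin n))
    (hΨ : Ψ = fun (z : (i : Fin s) × (Fin (k i) × Fin (ℓ i))) => WithLp.toLp 2 (fun (x : Fin m × Fin n) =>
      (∑ e, M z.1 z.2.1 e * (if x.1 = p z.1 e then 1 else 0)) *
      (∑ f, N z.1 z.2.2 f * (if x.2 = q z.1 f then 1 else 0)))) :
    Fintype.card ((i : Fin s) × (Fin (k i) × Fin (ℓ i))) = m * n ∧
    (∀ z, Ψ z ≠ 0) ∧
    (∀ z z', z ≠ z' → (inner ℂ (Ψ z) (Ψ z') : ℂ) = 0) ∧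
    Submodule.span ℂ (Set.range Ψ) = ⊤ := by
  -- the coordinate expression of the inner product
  have hinner : ∀ z z', (inner ℂ (Ψ z) (Ψ z') : ℂ) =
      ∑ x : Fin m × Fin n, (starRingEnd ℂ) (Ψ z x) * Ψ z' x := by
    intro z z'
    simp [PiLp.inner_apply, RCLike.inner_apply, mul_comm]
  -- support of Ψ z
  have hsupp : ∀ z (x : Fin m × Fin n), Ψ z x ≠ 0 →
      x ∈ Set.range (p z.1) ×ˢ Set.range (q z.1) := by
    intro z x hx
    subst hΨ
    by_contra hmem
    apply hx
    rcases not_and_or.mp hmem with h | h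
    · have : (∑ e, M z.1 z.2.1 e * (if x.1 = p z.1 e then 1 else 0)) = 0 := by
        refine Finset.sum_eq_zero fun e _ => ?_
        rw [if_neg (fun he => h ⟨e, he.symm⟩), mul_zero]
      simp only [WithLp.ofLp_toLp, this, zero_mul]
    · have : (∑ f, N z.1 z.2.2 f * (if x.2 = q z.1 f then 1 else 0)) = 0 := by
        refine Finset.sum_eq_zero fun f _ => ?_
        rw [if_neg (fun hf => h ⟨f, hf.symm⟩), mul_zero]
      simp only [WithLp.ofLp_toLp, this, mul_zero]
  -- inner product of two vectors from the same tile
  have hkey : ∀ (i : Fin s) (a a' : Fin (k i)) (b b' : Fin (ℓ i)),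
      (inner ℂ (Ψ ⟨i, (a, b)⟩) (Ψ ⟨i, (a', b')⟩) : ℂ) =
        (∑ e, (starRingEnd ℂ) (M i a e) * M i a' e) *
        (∑ f, (starRingEnd ℂ) (N i b f) * N i b' f) := by
    intro i a a' b b'
    rw [hinner]
    subst hΨ
    rw [← rowsum16 m (k i) (p i) (hp i) (M i a) (M i a'),
        ← rowsum16 n (ℓ i) (q i) (hq i) (N i b) (N i b'),
        Finset.sum_mul_sum]
    simp only [Fintype.sum_prod_type]
    refine Finset.sum_congr rfl fun x1 _ => Finset.sum_congr rfl fun x2 _ => ?_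
    simp only [WithLp.ofLp_toLp, map_mul]
    ring
  -- cross-tile orthogonality
  have hcross : ∀ z z', z.1 ≠ z'.1 → (inner ℂ (Ψ z) (Ψ z') : ℂ) = 0 := by
    intro z z' hne
    rw [hinner]
    refine Finset.sum_eq_zero fun x _ => ?_
    by_cases h1 : Ψ z x = 0
    · rw [h1, map_zero, zero_mul]
    · have hx1 := hsupp z x h1
      have h2 : Ψ z' x = 0 := by
        by_contra h2
        exact Set.disjoint_left.mp (hdisj z.1 z'.1 hne) hx1 (hsupp z' x h2)
      rw [h2, mul_zero]
  -- the bijection with the grid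
  have hbij : Function.Bijective
      (fun z : (i : Fin s) × (Fin (k i) × Fin (ℓ i)) => (p z.1 z.2.1, q z.1 z.2.2)) := by
    constructor
    · rintro ⟨i, a, b⟩ ⟨j, a', b'⟩ h
      simp only [Prod.mk.injEq] at h
      have hij : i = j := by
        by_contra hij
        exact Set.disjoint_left.mp (hdisj i j hij)
          (Set.mk_mem_prod ⟨a, rfl⟩ ⟨b, rfl⟩)
          (Set.mk_mem_prod ⟨a', h.1.symm⟩ ⟨b', h.2.symm⟩)
      subst hij
      have ha : a = a' := hp i h.1
      have hb : b = b' := hq i h.2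
      simp [ha, hb]
    · rintro ⟨x, y⟩
      have : (x, y) ∈ ⋃ i, Set.range (p i) ×ˢ Set.range (q i) := by
        rw [hcover]; trivial
      obtain ⟨i, ⟨⟨a, ha⟩, ⟨b, hb⟩⟩⟩ := Set.mem_iUnion.mp this
      exact ⟨⟨i, (a, b)⟩, by simp [ha, hb]⟩
  have hcard : Fintype.card ((i : Fin s) × (Fin (k i) × Fin (ℓ i))) = m * n := by
    rw [Fintype.card_congr (Equiv.ofBijective _ hbij)]
    simp
  -- self inner products are nonzero
  have hself : ∀ z, (inner ℂ (Ψ z) (Ψ z) : ℂ) ≠ 0 := by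
    rintro ⟨i, a, b⟩
    rw [hkey]
    exact mul_ne_zero (selfsum16 (k i) (M i a) (hMrow i a))
      (selfsum16 (ℓ i) (N i b) (hNrow i b))
  have hnz : ∀ z, Ψ z ≠ 0 := by
    intro z hz
    exact hself z (by rw [hz]; simp)
  -- pairwise orthogonality
  have horth : ∀ z z', z ≠ z' → (inner ℂ (Ψ z) (Ψ z') : ℂ) = 0 := by
    rintro ⟨i, a, b⟩ ⟨j, a', b'⟩ hne
    by_cases hij : i = j
    · subst hij
      rw [hkey]
      by_cases ha : a = a'
      · subst ha
        have hb : b ≠ b' := by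
          intro hb; exact hne (by rw [hb])
        rw [hNorth i b b' hb, mul_zero]
      · rw [hMorth i a a' ha, zero_mul]
    · exact hcross _ _ hij
  refine ⟨hcard, hnz, horth, ?_⟩
  -- span
  by_cases hne : Nonempty ((i : Fin s) × (Fin (k i) × Fin (ℓ i)))
  · -- normalize to an orthonormal family
    set Φ : ((i : Fin s) × (Fin (k i) × Fin (ℓ i))) → EuclideanSpace ℂ (Fin m × Fin n) :=
      fun z => ((‖Ψ z‖ : ℂ))⁻¹ • Ψ z with hΦdef
    have hnorm : ∀ z, (‖Ψ z‖ : ℂ) ≠ 0 := by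
      intro z
      simpa using norm_ne_zero_iff.mpr (hnz z)
    have hΦorth : Orthonormal ℂ Φ := by
      constructor
      · intro z
        simp only [hΦdef, norm_smul, norm_inv, Complex.norm_real, norm_norm, Real.norm_eq_abs,
          abs_norm]
        rw [inv_mul_cancel₀ (norm_ne_zero_iff.mpr (hnz z))]
      · intro z z' hzz
        simp only [hΦdef, inner_smul_left, inner_smul_right, horth z z' hzz, mul_zero]
    have hspanΦ : Submodule.span ℂ (Set.range Φ) = ⊤ := by
      refine hΦorth.linearIndependent.span_eq_top_of_card_eq_finrank ?_
      rw [finrank_euclideanSpace, hcard]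
      simp
    have : Submodule.span ℂ (Set.range Ψ) = Submodule.span ℂ (Set.range Φ) := by
      apply le_antisymm <;> rw [Submodule.span_le] <;> rintro _ ⟨z, rfl⟩
      · have : Ψ z = (‖Ψ z‖ : ℂ) • Φ z := by
          rw [hΦdef, smul_smul, mul_inv_cancel₀ (hnorm z), one_smul]
        rw [this]
        exact Submodule.smul_mem _ _ (Submodule.subset_span ⟨z, rfl⟩)
      · exact Submodule.smul_mem _ _ (Submodule.subset_span ⟨z, rfl⟩)
    rw [this, hspanΦ]
  · -- empty index type: the whole space is trivial
    have h0 : m * n = 0 := by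
      rw [← hcard, Fintype.card_eq_zero_iff.mpr (not_nonempty_iff.mp hne)]
    have : IsEmpty (Fin m × Fin n) := by
      rcases Nat.mul_eq_zero.mp h0 with h | h <;> subst h
      · exact ⟨fun x => x.1.elim0⟩
      · exact ⟨fun x => x.2.elim0⟩
    have hsub : Subsingleton (EuclideanSpace ℂ (Fin m × Fin n)) := by
      infer_instance
    exact Subsingleton.elim _ _
end

section
/- For any finite orthonormal set {ψ_1,…,ψ_s} of product states in ℂ^m ⊗ ℂ^n with s < mn, the operator ρ̄ = (1/(mn−s))(I − Σ_{i=1}^s |ψ_i⟩⟨ψ_i|) satisfies: ρ̄ is positive semidefinite with trace 1, and its partial transpose (I ⊗ T)ρ̄ is also positive semidefinite. -/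
/-!
Let `P = ∑ i, |ψ i⟩⟨ψ i| = A Aᴴ`, where `A` has the `ψ i` as columns and `Aᴴ A = 1`. Then `P` is a
Hermitian idempotent, so `1 - P = (1 - P)ᴴ (1 - P)` is positive semidefinite, and its trace is
`mn - tr (Aᴴ A) = mn - s`. The partial transpose turns `|u ⊗ v⟩⟨u ⊗ v|` into `|u ⊗ v̄⟩⟨u ⊗ v̄|`, so
it maps `1 - P` to the same kind of operator for the family `u i ⊗ v̄ i`. That family is again
orthonormal: its Gram entries `⟨u i, u j⟩ · conj ⟨v i, v j⟩` vanish exactly when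
`⟨u i, u j⟩ · ⟨v i, v j⟩` does, and agree with it on the diagonal.
-/

open scoped ComplexOrder
open Matrix

namespace Matrix

section Isometry

variable {m k R : Type*} [Fintype m] [Fintype k] [DecidableEq m] [DecidableEq k]
  [CommRing R] [StarRing R]

theorem posSemidef_one_sub_mul_conjTranspose [PartialOrder R] [StarOrderedRing R]
    {A : Matrix m k R} (hA : Aᴴ * A = 1) : (1 - A * Aᴴ).PosSemidef := by
  have hP : IsIdempotentElem (A * Aᴴ) := by
    rw [IsIdempotentElem, Matrix.mul_assoc, ← Matrix.mul_assoc Aᴴ, hA, Matrix.one_mul]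
  have hself : (1 - A * Aᴴ)ᴴ = 1 - A * Aᴴ := by
    rw [conjTranspose_sub, conjTranspose_one, conjTranspose_mul, conjTranspose_conjTranspose]
  have h := posSemidef_conjTranspose_mul_self (1 - A * Aᴴ)
  rwa [hself, hP.one_sub.eq] at h

theorem trace_one_sub_mul_conjTranspose {A : Matrix m k R} (hA : Aᴴ * A = 1) :
    (1 - A * Aᴴ).trace = (Fintype.card m : R) - Fintype.card k := by
  rw [trace_sub, trace_mul_comm, hA, trace_one, trace_one]

end Isometry

section Families

variable {m k R : Type*} [CommRing R] [StarRing R]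

theorem transpose_of_mul_conjTranspose [Fintype k] (φ : k → m → R) :
    (of φ)ᵀ * (of φ)ᵀᴴ = ∑ i, vecMulVec (φ i) (star (φ i)) := by
  ext p q
  simp [mul_apply, sum_apply, vecMulVec_apply]

variable [Fintype m] [DecidableEq k]

def IsOrthonormal (φ : k → m → R) : Prop :=
  ∀ i j, star (φ i) ⬝ᵥ φ j = if i = j then 1 else 0

theorem IsOrthonormal.conjTranspose_mul_self {φ : k → m → R} (hφ : IsOrthonormal φ) :
    (of φ)ᵀᴴ * (of φ)ᵀ = 1 := by
  ext i j
  rw [one_apply, ← hφ i j]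
  rfl

variable [Fintype k] [DecidableEq m]

theorem IsOrthonormal.posSemidef_one_sub_sum [PartialOrder R] [StarOrderedRing R]
    {φ : k → m → R} (hφ : IsOrthonormal φ) :
    (1 - ∑ i, vecMulVec (φ i) (star (φ i))).PosSemidef := by
  rw [← transpose_of_mul_conjTranspose]
  exact posSemidef_one_sub_mul_conjTranspose hφ.conjTranspose_mul_self

theorem IsOrthonormal.trace_one_sub_sum {φ : k → m → R} (hφ : IsOrthonormal φ) :
    (1 - ∑ i, vecMulVec (φ i) (star (φ i))).trace = (Fintype.card m : R) - Fintype.card k := by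
  rw [← transpose_of_mul_conjTranspose]
  exact trace_one_sub_mul_conjTranspose hφ.conjTranspose_mul_self

end Families

section PartialTranspose

variable {m n R : Type*} [CommSemiring R]

def kroneckerVec (u : m → R) (v : n → R) : m × n → R := fun p => u p.1 * v p.2

def partialTranspose : Matrix (m × n) (m × n) R →ₗ[R] Matrix (m × n) (m × n) R where
  toFun M := of fun p q => M (p.1, q.2) (q.1, p.2)
  map_add' _ _ := rfl
  map_smul' _ _ := rfl

@[simp]
theorem partialTranspose_apply (M : Matrix (m × n) (m × n) R) (p q : m × n) :
    partialTranspose M p q = M (p.1, q.2) (q.1, p.2) :=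
  rfl

theorem partialTranspose_one [DecidableEq m] [DecidableEq n] :
    partialTranspose (1 : Matrix (m × n) (m × n) R) = 1 := by
  ext ⟨a, b⟩ ⟨c, d⟩
  simp only [partialTranspose_apply, one_apply, Prod.mk.injEq]
  grind

theorem partialTranspose_vecMulVec_kroneckerVec (u u' : m → R) (v v' : n → R) :
    partialTranspose (vecMulVec (kroneckerVec u v) (kroneckerVec u' v')) =
      vecMulVec (kroneckerVec u v') (kroneckerVec u' v) := by
  ext p q
  simp only [partialTranspose_apply, kroneckerVec, vecMulVec_apply]
  ring

theorem kroneckerVec_dotProduct_kroneckerVec [Fintype m] [Fintype n] (u u' : m → R)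
    (v v' : n → R) :
    kroneckerVec u v ⬝ᵥ kroneckerVec u' v' = (u ⬝ᵥ u') * (v ⬝ᵥ v') := by
  simp only [dotProduct, kroneckerVec, Fintype.sum_prod_type, Finset.sum_mul_sum]
  exact Finset.sum_congr rfl fun _ _ => Finset.sum_congr rfl fun _ _ => by ring

variable [StarRing R]

theorem star_kroneckerVec (u : m → R) (v : n → R) :
    star (kroneckerVec u v) = kroneckerVec (star u) (star v) := by
  ext p
  exact star_mul' _ _

end PartialTranspose

theorem partialTranspose_one_sub_sum_kroneckerVec {m n k R : Type*} [DecidableEq m]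
    [DecidableEq n] [Fintype k] [CommRing R] [StarRing R] (u : k → m → R) (v : k → n → R) :
    partialTranspose
        (1 - ∑ i, vecMulVec (kroneckerVec (u i) (v i)) (star (kroneckerVec (u i) (v i)))) =
      1 - ∑ i, vecMulVec (kroneckerVec (u i) (star (v i)))
        (star (kroneckerVec (u i) (star (v i)))) := by
  simp only [map_sub, map_sum, partialTranspose_one, star_kroneckerVec,
    partialTranspose_vecMulVec_kroneckerVec, star_star]

theorem IsOrthonormal.kroneckerVec_star {m n k R : Type*} [Fintype m] [Fintype n] [DecidableEq k]
    [Field R] [StarRing R] {u : k → m → R} {v : k → n → R}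
    (h : IsOrthonormal fun i => kroneckerVec (u i) (v i)) :
    IsOrthonormal fun i => kroneckerVec (u i) (star (v i)) := by
  intro i j
  specialize h i j
  simp only [star_kroneckerVec, star_star, kroneckerVec_dotProduct_kroneckerVec] at h ⊢
  rw [dotProduct_comm (v i), star_dotProduct (v j)]
  split_ifs at h ⊢ with hij
  · subst hij
    rwa [← star_dotProduct]
  · rcases mul_eq_zero.mp h with h | h
    · rw [h, zero_mul]
    · rw [h, star_zero, mul_zero]

end Matrix

/-- For an orthonormal set of s < mn product states in ℂ^m ⊗ ℂ^n, the
normalized projector onto the complement is a PPT state: it is positive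
semidefinite with trace 1, and its partial transpose is positive semidefinite. -/
theorem stmt_17 (m n s : ℕ) (hs : s < m * n)
    (ψ : Fin s → (Fin m × Fin n → ℂ))
    (hprod : ∀ i, ∃ (u : Fin m → ℂ) (v : Fin n → ℂ), ψ i = fun p => u p.1 * v p.2)
    (hunit : ∀ i, ∑ p, (starRingEnd ℂ) (ψ i p) * ψ i p = 1)
    (horth : ∀ i j, i ≠ j → ∑ p, (starRingEnd ℂ) (ψ i p) * ψ j p = 0)
    (ρ : Matrix (Fin m × Fin n) (Fin m × Fin n) ℂ)
    (hρ : ρ = (((m * n - s : ℕ) : ℂ))⁻¹ •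
      (1 - ∑ i, Matrix.vecMulVec (ψ i) (star (ψ i)))) :
    ρ.PosSemidef ∧ ρ.trace = 1 ∧
    Matrix.PosSemidef (Matrix.of fun p q : Fin m × Fin n => ρ (p.1, q.2) (q.1, p.2)) := by
  have hψ : IsOrthonormal ψ := fun i j => by
    split_ifs with hij
    · exact hij ▸ hunit i
    · exact horth i j hij
  have hc : (0 : ℂ) ≤ ((m * n - s : ℕ) : ℂ)⁻¹ := by positivity
  choose u v huv using hprod
  obtain rfl : ψ = fun i => kroneckerVec (u i) (v i) := funext huv
  refine ⟨hρ ▸ hψ.posSemidef_one_sub_sum.smul hc, ?_, ?_⟩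
  · rw [hρ, trace_smul, hψ.trace_one_sub_sum, smul_eq_mul]
    simp only [Fintype.card_prod, Fintype.card_fin]
    rw [← Nat.cast_sub hs.le]
    exact inv_mul_cancel₀ (Nat.cast_ne_zero.mpr (Nat.sub_pos_of_lt hs).ne')
  · change (partialTranspose ρ).PosSemidef
    rw [hρ, map_smul, partialTranspose_one_sub_sum_kroneckerVec]
    exact hψ.kroneckerVec_star.posSemidef_one_sub_sum.smul hc
end

section
/- Suppose S is a finite orthogonal set of product states in ℂ^{d_1} ⊗ ⋯ ⊗ ℂ^{d_n}, and X is a proper nonzero subspace of span(S)^⊥ containing every product state of span(S)^⊥. Then S ∪ P is never an orthogonal product basis of the full space for any set P of product states; i.e., S cannot be completed to an orthogonal product basis. -/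
open scoped Classical
/-- If S is a finite orthogonal set of product states and the product states
of span(S)^⊥ are all contained in a proper nonzero subspace X of span(S)^⊥,
then S cannot be completed to an orthogonal product basis of the full space. -/
theorem stmt_19 (n : ℕ) (d : Fin n → ℕ)
    (S : Finset (EuclideanSpace ℂ (∀ i, Fin (d i))))
    (hSprod : ∀ ψ ∈ S, ψ ≠ 0 ∧
      ∃ u : ∀ i, Fin (d i) → ℂ, ψ = WithLp.toLp 2 (fun x => ∏ i, u i (x i)))
    (hSorth : ∀ ψ ∈ S, ∀ φ ∈ S, ψ ≠ φ → (inner ℂ ψ φ : ℂ) = 0)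
    (X : Submodule ℂ (EuclideanSpace ℂ (∀ i, Fin (d i))))
    (hXlt : X < (Submodule.span ℂ (S : Set (EuclideanSpace ℂ (∀ i, Fin (d i)))))ᗮ)
    (hXne : X ≠ ⊥)
    (hXprod : ∀ ψ ∈ (Submodule.span ℂ (S : Set (EuclideanSpace ℂ (∀ i, Fin (d i)))))ᗮ,
      ψ ≠ 0 → (∃ u : ∀ i, Fin (d i) → ℂ, ψ = WithLp.toLp 2 (fun x => ∏ i, u i (x i))) → ψ ∈ X) :
    ∀ P : Finset (EuclideanSpace ℂ (∀ i, Fin (d i))),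
      (∀ ψ ∈ P, ψ ≠ 0 ∧ ∃ u : ∀ i, Fin (d i) → ℂ, ψ = WithLp.toLp 2 (fun x => ∏ i, u i (x i))) →
      ¬((∀ ψ ∈ S ∪ P, ∀ φ ∈ S ∪ P, ψ ≠ φ → (inner ℂ ψ φ : ℂ) = 0) ∧
        (S ∪ P).card = Module.finrank ℂ (EuclideanSpace ℂ (∀ i, Fin (d i)))) := by
  intro P hPprod ⟨horth, hcard⟩
  set V := Submodule.span ℂ (S : Set (EuclideanSpace ℂ (∀ i, Fin (d i)))) with hV
  -- every element of S ∪ P is nonzero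
  have hne : ∀ ψ ∈ S ∪ P, ψ ≠ 0 := by
    intro ψ hψ
    rcases Finset.mem_union.1 hψ with h | h
    · exact (hSprod ψ h).1
    · exact (hPprod ψ h).1
  -- elements of P not in S lie in Vᗮ, hence in X
  have hPX : ∀ ψ ∈ P, ψ ∉ S → ψ ∈ X := by
    intro ψ hψ hψS
    have hperp : ψ ∈ Vᗮ := by
      rw [Submodule.mem_orthogonal]
      intro u hu
      induction hu using Submodule.span_induction with
      | mem x hx =>
        exact horth x (Finset.mem_union_left _ hx) ψ (Finset.mem_union_right _ hψ)
          (fun h => hψS (h ▸ hx))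
      | zero => simp
      | add x y hx hy ihx ihy => rw [inner_add_left, ihx, ihy, add_zero]
      | smul a x hx ih => rw [inner_smul_left, ih, mul_zero]
    exact hXprod ψ hperp ((hPprod ψ hψ).1) ((hPprod ψ hψ).2)
  -- the union is linearly independent
  have hli : LinearIndependent ℂ ((↑) : (S ∪ P : Finset (EuclideanSpace ℂ (∀ i, Fin (d i)))) → EuclideanSpace ℂ (∀ i, Fin (d i))) := by
    refine linearIndependent_of_ne_zero_of_inner_eq_zero ?_ ?_
    · intro i
      exact hne i i.2
    · intro i j hij
      exact horth i i.2 j j.2 (fun h => hij (Subtype.ext h))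
  -- span of the union is inside V ⊔ X
  have hspan : Submodule.span ℂ ((S ∪ P : Finset (EuclideanSpace ℂ (∀ i, Fin (d i)))) : Set (EuclideanSpace ℂ (∀ i, Fin (d i)))) ≤ V ⊔ X := by
    rw [Submodule.span_le]
    intro ψ hψ
    rcases Finset.mem_union.1 (by simpa using hψ) with h | h
    · exact Submodule.mem_sup_left (Submodule.subset_span h)
    · by_cases hS : ψ ∈ S
      · exact Submodule.mem_sup_left (Submodule.subset_span hS)
      · exact Submodule.mem_sup_right (hPX ψ h hS)
  -- finrank computations
  have h1 : Module.finrank ℂ (Submodule.span ℂ ((S ∪ P : Finset (EuclideanSpace ℂ (∀ i, Fin (d i)))) : Set (EuclideanSpace ℂ (∀ i, Fin (d i))))) = (S ∪ P).card :=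
    finrank_span_finset_eq_card hli
  have h2 : Module.finrank ℂ (Submodule.span ℂ ((S ∪ P : Finset (EuclideanSpace ℂ (∀ i, Fin (d i)))) : Set (EuclideanSpace ℂ (∀ i, Fin (d i))))) ≤
      Module.finrank ℂ ↥(V ⊔ X) := Submodule.finrank_mono hspan
  have h3 : Module.finrank ℂ ↥(V ⊔ X) ≤ Module.finrank ℂ V + Module.finrank ℂ X := by
    have := Submodule.finrank_sup_add_finrank_inf_eq V X
    omega
  have h4 : Module.finrank ℂ X < Module.finrank ℂ Vᗮ :=
    Submodule.finrank_lt_finrank_of_lt hXlt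
  have h5 : Module.finrank ℂ V + Module.finrank ℂ Vᗮ = Module.finrank ℂ (EuclideanSpace ℂ (∀ i, Fin (d i))) :=
    Submodule.finrank_add_finrank_orthogonal V
  omega
end
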